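/- For all real a and b with |a - b| ≤ 1, |μ(a) - μ(b)| ≤ e · μ'(b) · |a - b|. -/

import Mathlib

/-!
Writing `μ' z = μ z (1 - μ z) = 1 / (2 + 2 cosh z)`, the bound
`cosh (b + d) ≥ exp (-|d|) * cosh b` shows that `μ'` changes by at most a factor `exp |t - b|`
between `b` and `t`. So `μ'` is at most `e * μ' b` on the unit ball around `b`, and the mean value
inequality on that ball gives the claim.
-/

noncomputable def μ (z : ℝ) : ℝ := 1 / (1 + Real.exp (-z))

open Real

lemma exp_neg_abs_mul_cosh_le_cosh_add (x d : ℝ) : exp (-|d|) * cosh x ≤ cosh (x + d) := by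
  have hd : exp (-|d|) ≤ exp d := exp_le_exp.2 (by linarith [neg_abs_le d])
  have hnd : exp (-|d|) ≤ exp (-d) := exp_le_exp.2 (by linarith [le_abs_self d])
  rw [cosh_eq, cosh_eq, neg_add, exp_add, exp_add]
  nlinarith [mul_le_mul_of_nonneg_right hd (exp_pos x).le,
    mul_le_mul_of_nonneg_right hnd (exp_pos (-x)).le]

lemma hasDerivAt_μ (z : ℝ) : HasDerivAt μ (2 + 2 * cosh z)⁻¹ z := by
  have hden : HasDerivAt (fun z => 1 + exp (-z)) (-exp (-z)) z := by
    simpa using ((hasDerivAt_exp (-z)).comp z (hasDerivAt_neg z)).const_add 1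
  have hμ : μ = fun z => (1 + exp (-z))⁻¹ := by
    funext z; simp [μ]
  rw [hμ]
  refine (hden.inv (by positivity)).congr_deriv ?_
  have hprod : exp z * exp (-z) = 1 := by rw [← exp_add, add_neg_cancel, exp_zero]
  rw [cosh_eq, neg_neg, div_eq_iff (by positivity)]
  field_simp
  linear_combination hprod

lemma deriv_μ (z : ℝ) : deriv μ z = (2 + 2 * cosh z)⁻¹ := (hasDerivAt_μ z).deriv

lemma deriv_μ_pos (z : ℝ) : 0 < deriv μ z := by
  rw [deriv_μ]; positivity

lemma deriv_μ_le_exp_abs_sub_mul (t b : ℝ) : deriv μ t ≤ exp |t - b| * deriv μ b := by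
  have hcosh := exp_neg_abs_mul_cosh_le_cosh_add b (t - b)
  rw [add_sub_cancel] at hcosh
  have hexp : exp (-|t - b|) ≤ 1 := exp_le_one_iff.2 (neg_nonpos.2 (abs_nonneg _))
  have hscaled : exp (-|t - b|) * (2 + 2 * cosh b) ≤ 2 + 2 * cosh t := by nlinarith
  calc deriv μ t = (2 + 2 * cosh t)⁻¹ := deriv_μ t
    _ ≤ (exp (-|t - b|) * (2 + 2 * cosh b))⁻¹ := inv_anti₀ (by positivity) hscaled
    _ = exp |t - b| * deriv μ b := by rw [deriv_μ, mul_inv, exp_neg, inv_inv]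

theorem logistic_local_mean_value_bound (a b : ℝ) (h : |a - b| ≤ 1) :
    |μ a - μ b| ≤ Real.exp 1 * deriv μ b * |a - b| := by
  have hbound : ∀ t ∈ Metric.closedBall b 1, ‖deriv μ t‖ ≤ exp 1 * deriv μ b := by
    intro t ht
    rw [Metric.mem_closedBall, dist_eq] at ht
    calc ‖deriv μ t‖ = deriv μ t := norm_of_nonneg (deriv_μ_pos t).le
      _ ≤ exp |t - b| * deriv μ b := deriv_μ_le_exp_abs_sub_mul t b
      _ ≤ exp 1 * deriv μ b := by gcongr; exact (deriv_μ_pos b).le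
  have ha : a ∈ Metric.closedBall b 1 := by rwa [Metric.mem_closedBall, dist_eq]
  simpa [norm_eq_abs] using (convex_closedBall b 1).norm_image_sub_le_of_norm_deriv_le
    (fun t _ => (hasDerivAt_μ t).differentiableAt) hbound
    (Metric.mem_closedBall_self zero_le_one) ha
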